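/- arXiv:2306.06059 — 5 statements merged into one kernel-verified Lean document; each statement's English description precedes it below -/
import Mathlib

section
/- Let Z^(n) = (Z_1,…,Z_n) be i.i.d. variables from a distribution P_0 on a Polish space, and let (P_n)_n be a sequence of random probability measures on ℝ² such that P_n is σ(Z^(n))-measurable for each n. Let (X_n, Y_n) be ℝ-valued random variables with conditional joint law P_n given P_n, and let P_n^X and P_n^Y denote the marginal conditional laws of X_n and Y_n. Suppose d_BL(P_n^X, P^X) → 0 in P_0-probability for a fixed probability measure P^X on ℝ, and d_BL(P_n^Y, δ_c) → 0 in P_0-probability for a fixed constant c ∈ ℝ. Then d_BL(conditional law of X_n + Y_n given P_n, conditional law of X_n + c given P_n) → 0 in P_0-probability, and d_BL(conditional law of X_n·Y_n given P_n, conditional law of c·X_n given P_n) → 0 in P_0-probability. -/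
open MeasureTheory ProbabilityTheory Filter
open scoped NNReal ENNReal

/-- The bounded Lipschitz distance between two probability measures on `ℝ`:
the supremum of `|∫ f dμ - ∫ f dν|` over all `f : ℝ → ℝ` whose sup-norm plus
Lipschitz constant is at most one. -/
noncomputable def dBL (μ ν : Measure ℝ) : ℝ :=
  sSup {d : ℝ | ∃ f : ℝ → ℝ, ∃ K : ℝ≥0, LipschitzWith K f ∧
    (∀ x, |f x| + (K : ℝ) ≤ 1) ∧ d = |(∫ x, f x ∂μ) - ∫ x, f x ∂ν|}

/-! For fixed `ω` the claim is a deterministic inequality. Coupling two image measures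
`μ ∘ φ⁻¹`, `μ ∘ ψ⁻¹` through `μ` itself gives `d_BL ≤ 2 ∫ min 1 |φ - ψ| dμ`, since every test
function is bounded by `1` and `1`-Lipschitz. For the sum, `φ - ψ = Y - c`, and
`y ↦ min 1 |y - c| / 2` is itself a test function vanishing at `c`, so the distance is at most
`4 d_BL(P^Y, δ_c)`. For the product, `|XY - cX| = |X| |Y - c|`: on `|X| ≤ M` this is at most
`M |Y - c|`, and the mass of `|X| ≥ M` is bounded by the integral of a Lipschitz cutoff, which
under `P_n^X` is within `2 d_BL(P_n^X, P^X)` of its integral under `P^X`; the latter tends to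
`0` as `M → ∞`. -/

open Topology

section

variable {Ω : Type*} [MeasurableSpace Ω] {μ : Measure Ω} {u v w : ℕ → Ω → ℝ}

/-- Only the upper tail is controlled; for nonnegative `u` (such as `d_BL` distances) this is
convergence to `0` in measure. -/
def TendstoZeroInProb (μ : Measure Ω) (u : ℕ → Ω → ℝ) : Prop :=
  ∀ ε > (0 : ℝ), Tendsto (fun n => μ {ω | ε < u n ω}) atTop (𝓝 0)

namespace TendstoZeroInProb

lemma of_forall_le_add
    (h : ∀ δ > (0 : ℝ), ∃ v, TendstoZeroInProb μ v ∧ ∀ n ω, u n ω ≤ v n ω + δ) :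
    TendstoZeroInProb μ u := by
  intro ε hε
  obtain ⟨v, hv, huv⟩ := h (ε / 2) (by positivity)
  refine tendsto_of_tendsto_of_tendsto_of_le_of_le tendsto_const_nhds (hv (ε / 2) (by positivity))
    (fun n => zero_le) (fun n => measure_mono fun ω (hω : ε < u n ω) => ?_)
  change ε / 2 < v n ω
  linarith [huv n ω]

lemma mono (hv : TendstoZeroInProb μ v) (huv : ∀ n ω, u n ω ≤ v n ω) :
    TendstoZeroInProb μ u :=
  of_forall_le_add fun δ _ => ⟨v, hv, fun n ω => by linarith [huv n ω]⟩

lemma const_mul (hv : TendstoZeroInProb μ v) {A : ℝ} (hA : 0 < A) :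
    TendstoZeroInProb μ (fun n ω => A * v n ω) := by
  intro ε hε
  convert hv (ε / A) (by positivity) using 4 with n ω
  simp only [div_lt_iff₀' hA]

lemma add (hv : TendstoZeroInProb μ v) (hw : TendstoZeroInProb μ w) :
    TendstoZeroInProb μ (fun n ω => v n ω + w n ω) := by
  intro ε hε
  have hsum := (hv (ε / 2) (by positivity)).add (hw (ε / 2) (by positivity))
  rw [add_zero] at hsum
  refine tendsto_of_tendsto_of_tendsto_of_le_of_le tendsto_const_nhds hsum
    (fun n => zero_le) (fun n => (measure_mono fun ω (hω : ε < v n ω + w n ω) => ?_).trans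
      (measure_union_le _ _))
  show ε / 2 < v n ω ∨ ε / 2 < w n ω
  by_contra! h
  linarith [h.1, h.2]

end TendstoZeroInProb

end

section BoundedLipschitz

variable {μ ν : Measure ℝ} {f : ℝ → ℝ} {K : ℝ≥0}

lemma abs_le_one_of_abs_add_le_one (hfK : ∀ x, |f x| + (K : ℝ) ≤ 1) (x : ℝ) : |f x| ≤ 1 := by
  linarith [hfK x, K.coe_nonneg]

lemma abs_sub_le_two_mul_min_one_abs_sub (hf : LipschitzWith K f)
    (hfK : ∀ x, |f x| + (K : ℝ) ≤ 1) (a b : ℝ) : |f a - f b| ≤ 2 * min 1 |a - b| := by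
  have hK : (K : ℝ) ≤ 1 := by linarith [hfK a, abs_nonneg (f a)]
  have hlip : |f a - f b| ≤ K * |a - b| := by simpa [Real.dist_eq] using hf.dist_le_mul a b
  have hbdd : |f a - f b| ≤ 2 := by
    linarith [abs_sub (f a) (f b), abs_le_one_of_abs_add_le_one hfK a,
      abs_le_one_of_abs_add_le_one hfK b]
  rcases le_total |a - b| 1 with h | h
  · rw [min_eq_right h]; nlinarith [abs_nonneg (a - b)]
  · rw [min_eq_left h]; linarith

lemma integrable_of_abs_add_le_one [IsFiniteMeasure μ] (hf : LipschitzWith K f)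
    (hfK : ∀ x, |f x| + (K : ℝ) ≤ 1) : Integrable f μ :=
  .of_bound hf.continuous.aestronglyMeasurable 1
    (.of_forall fun x => abs_le_one_of_abs_add_le_one hfK x)

lemma abs_integral_sub_le_dBL [IsFiniteMeasure μ] [IsFiniteMeasure ν] (hf : LipschitzWith K f)
    (hfK : ∀ x, |f x| + (K : ℝ) ≤ 1) :
    |(∫ x, f x ∂μ) - ∫ x, f x ∂ν| ≤ dBL μ ν := by
  refine le_csSup ⟨μ.real Set.univ + ν.real Set.univ, ?_⟩ ⟨f, K, hf, hfK, rfl⟩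
  rintro d ⟨g, L, -, hgL, rfl⟩
  have hg : ∀ x, ‖g x‖ ≤ 1 := abs_le_one_of_abs_add_le_one hgL
  have hμ := norm_integral_le_of_norm_le_const (μ := μ) (.of_forall hg)
  have hν := norm_integral_le_of_norm_le_const (μ := ν) (.of_forall hg)
  simp only [Real.norm_eq_abs, one_mul] at hμ hν
  linarith [abs_sub (∫ x, g x ∂μ) (∫ x, g x ∂ν)]

lemma dBL_le_of_forall {B : ℝ} (hB : 0 ≤ B)
    (h : ∀ (f : ℝ → ℝ) (K : ℝ≥0), LipschitzWith K f → (∀ x, |f x| + (K : ℝ) ≤ 1) →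
      |(∫ x, f x ∂μ) - ∫ x, f x ∂ν| ≤ B) : dBL μ ν ≤ B :=
  Real.sSup_le (by rintro d ⟨f, K, hf, hfK, rfl⟩; exact h f K hf hfK) hB

lemma abs_integral_sub_le_two_mul_dBL [IsFiniteMeasure μ] [IsFiniteMeasure ν] {g : ℝ → ℝ}
    (hg : LipschitzWith 1 g) (hg1 : ∀ x, |g x| ≤ 1) :
    |(∫ x, g x ∂μ) - ∫ x, g x ∂ν| ≤ 2 * dBL μ ν := by
  have hhalf : LipschitzWith (1 / 2) (fun x => g x / 2) := by
    refine .of_dist_le_mul fun x y => ?_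
    have := hg.dist_le_mul x y
    simp only [Real.dist_eq, NNReal.coe_one, one_mul] at this ⊢
    rw [← sub_div, abs_div, abs_two]; push_cast; linarith
  have hhalf_bdd : ∀ x, |g x / 2| + ((1 / 2 : ℝ≥0) : ℝ) ≤ 1 := fun x => by
    rw [abs_div, abs_two]; push_cast; linarith [hg1 x]
  have := abs_integral_sub_le_dBL (μ := μ) (ν := ν) hhalf hhalf_bdd
  rw [integral_div, integral_div, ← sub_div, abs_div, abs_two] at this
  linarith

end BoundedLipschitz

section Coupling

variable {α : Type*} [MeasurableSpace α] (μ : Measure α) [IsFiniteMeasure μ]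

lemma dBL_map_le_integral {φ ψ : α → ℝ} (hφ : Measurable φ) (hψ : Measurable ψ) :
    dBL (μ.map φ) (μ.map ψ) ≤ 2 * ∫ a, min 1 |φ a - ψ a| ∂μ := by
  have hnonneg : ∀ a, 0 ≤ min 1 |φ a - ψ a| := fun a => by positivity
  have hint : Integrable (fun a => min 1 |φ a - ψ a|) μ :=
    .of_bound (by fun_prop) 1 (.of_forall fun a => by
      rw [Real.norm_eq_abs, abs_of_nonneg (hnonneg a)]
      exact min_le_left _ _)
  refine dBL_le_of_forall (mul_nonneg zero_le_two (integral_nonneg hnonneg)) fun f K hf hfK => ?_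
  have hfφ : Integrable (fun a => f (φ a)) μ :=
    (integrable_of_abs_add_le_one hf hfK).comp_measurable hφ
  have hfψ : Integrable (fun a => f (ψ a)) μ :=
    (integrable_of_abs_add_le_one hf hfK).comp_measurable hψ
  rw [integral_map hφ.aemeasurable hf.continuous.aestronglyMeasurable,
    integral_map hψ.aemeasurable hf.continuous.aestronglyMeasurable, ← integral_sub hfφ hfψ]
  calc |∫ a, f (φ a) - f (ψ a) ∂μ|
      ≤ ∫ a, |f (φ a) - f (ψ a)| ∂μ := abs_integral_le_integral_abs
    _ ≤ ∫ a, 2 * min 1 |φ a - ψ a| ∂μ :=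
      integral_mono (hfφ.sub hfψ).abs (hint.const_mul 2) fun a =>
        abs_sub_le_two_mul_min_one_abs_sub hf hfK _ _
    _ = 2 * ∫ a, min 1 |φ a - ψ a| ∂μ := integral_const_mul _ _

end Coupling

lemma lipschitzWith_min_one_abs_sub (c : ℝ) : LipschitzWith 1 (fun y : ℝ => min 1 |y - c|) := by
  simpa [Real.dist_eq] using (LipschitzWith.dist_left c).const_min 1

lemma integral_min_one_abs_sub_le_dBL_dirac (ν : Measure ℝ) [IsFiniteMeasure ν] (c : ℝ) :
    ∫ y, min 1 |y - c| ∂ν ≤ 2 * dBL ν (Measure.dirac c) := by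
  have := abs_integral_sub_le_two_mul_dBL (μ := ν) (ν := Measure.dirac c)
    (lipschitzWith_min_one_abs_sub c) fun y => by
      rw [abs_of_nonneg (by positivity)]; exact min_le_left _ _
  rw [integral_dirac, sub_self, abs_zero, min_eq_right zero_le_one, sub_zero] at this
  exact (le_abs_self _).trans this

def tailCutoff (M x : ℝ) : ℝ := min 1 (max 0 (|x| - (M - 1)))

lemma lipschitzWith_tailCutoff (M : ℝ) : LipschitzWith 1 (tailCutoff M) := by
  have h :=
    (((LipschitzWith.dist_left (0 : ℝ)).sub (LipschitzWith.const (M - 1))).const_max 0).const_min 1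
  simp only [Real.dist_eq, sub_zero, add_zero] at h
  exact h

lemma tailCutoff_nonneg (M x : ℝ) : 0 ≤ tailCutoff M x := le_min zero_le_one (le_max_left _ _)

lemma tailCutoff_le_one (M x : ℝ) : tailCutoff M x ≤ 1 := min_le_left _ _

lemma tailCutoff_of_le_abs {M x : ℝ} (hx : M ≤ |x|) : tailCutoff M x = 1 := by
  rw [tailCutoff, max_eq_right (by linarith), min_eq_left (by linarith)]

lemma tailCutoff_of_abs_le {M x : ℝ} (hx : |x| ≤ M - 1) : tailCutoff M x = 0 := by
  rw [tailCutoff, max_eq_left (by linarith), min_eq_right zero_le_one]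

lemma tendsto_integral_tailCutoff (ν : Measure ℝ) [IsFiniteMeasure ν] :
    Tendsto (fun M => ∫ x, tailCutoff M x ∂ν) atTop (𝓝 0) := by
  have := tendsto_integral_filter_of_dominated_convergence (μ := ν) (l := atTop)
    (F := tailCutoff) (f := 0) (fun _ => 1)
    (.of_forall fun M => (lipschitzWith_tailCutoff M).continuous.aestronglyMeasurable)
    (.of_forall fun M => .of_forall fun x => by
      rw [Real.norm_eq_abs, abs_of_nonneg (tailCutoff_nonneg M x)]
      exact tailCutoff_le_one M x)
    (integrable_const 1)
    (.of_forall fun x => tendsto_const_nhds.congr' <|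
      (eventually_ge_atTop (|x| + 1)).mono fun M hM =>
        (tailCutoff_of_abs_le (by linarith)).symm)
  simpa using this

lemma min_one_abs_mul_sub_le {M : ℝ} (hM : 1 ≤ M) (c x y : ℝ) :
    min 1 |x * y - c * x| ≤ M * min 1 |y - c| + tailCutoff M x := by
  rcases le_total |x| M with hxM | hxM
  · have hprod : |x * y - c * x| = |x| * |y - c| := by rw [← abs_mul]; ring_nf
    have : min 1 |x * y - c * x| ≤ M * min 1 |y - c| := by
      rw [hprod]
      rcases le_total |y - c| 1 with h | h
      · rw [min_eq_right h]
        exact (min_le_right _ _).trans (mul_le_mul_of_nonneg_right hxM (abs_nonneg _))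
      · rw [min_eq_left h]; exact (min_le_left _ _).trans (by linarith)
    linarith [tailCutoff_nonneg M x]
  · rw [tailCutoff_of_le_abs hxM]
    linarith [min_le_left 1 |x * y - c * x|, mul_nonneg (by linarith : (0:ℝ) ≤ M)
      (le_min zero_le_one (abs_nonneg (y - c)))]

section Slutsky

variable (μ : Measure (ℝ × ℝ)) [IsFiniteMeasure μ] (c : ℝ)

lemma dBL_map_add_le :
    dBL (μ.map fun p => p.1 + p.2) (μ.map fun p => p.1 + c) ≤
      4 * dBL (μ.map Prod.snd) (Measure.dirac c) := by
  have h := dBL_map_le_integral μ (φ := fun p => p.1 + p.2) (ψ := fun p => p.1 + c)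
    (by fun_prop) (by fun_prop)
  simp only [add_sub_add_left_eq_sub] at h
  rw [← integral_map measurable_snd.aemeasurable
    (lipschitzWith_min_one_abs_sub c).continuous.aestronglyMeasurable] at h
  linarith [integral_min_one_abs_sub_le_dBL_dirac (μ.map Prod.snd) c]

lemma dBL_map_mul_le (ν : Measure ℝ) [IsFiniteMeasure ν] {M : ℝ} (hM : 1 ≤ M) :
    dBL (μ.map fun p => p.1 * p.2) (μ.map fun p => c * p.1) ≤
      4 * M * dBL (μ.map Prod.snd) (Measure.dirac c) + 4 * dBL (μ.map Prod.fst) ν +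
        2 * ∫ x, tailCutoff M x ∂ν := by
  have h := dBL_map_le_integral μ (φ := fun p => p.1 * p.2) (ψ := fun p => c * p.1)
    (by fun_prop) (by fun_prop)
  have hY : Integrable (fun p : ℝ × ℝ => min 1 |p.2 - c|) μ :=
    .of_bound (by fun_prop) 1 (.of_forall fun p => by
      rw [Real.norm_eq_abs, abs_of_nonneg (by positivity)]; exact min_le_left _ _)
  have hX : Integrable (fun p : ℝ × ℝ => tailCutoff M p.1) μ :=
    .of_bound ((lipschitzWith_tailCutoff M).continuous.comp continuous_fst).aestronglyMeasurable 1
      (.of_forall fun p => by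
        rw [Real.norm_eq_abs, abs_of_nonneg (tailCutoff_nonneg M _)]; exact tailCutoff_le_one M _)
  have hsplit : ∫ p, min 1 |p.1 * p.2 - c * p.1| ∂μ ≤
      M * ∫ y, min 1 |y - c| ∂(μ.map Prod.snd) + ∫ x, tailCutoff M x ∂(μ.map Prod.fst) := by
    rw [integral_map measurable_snd.aemeasurable
        (lipschitzWith_min_one_abs_sub c).continuous.aestronglyMeasurable,
      integral_map measurable_fst.aemeasurable
        (lipschitzWith_tailCutoff M).continuous.aestronglyMeasurable,
      ← integral_const_mul, ← integral_add (hY.const_mul M) hX]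
    exact integral_mono_of_nonneg (.of_forall fun p => by positivity) ((hY.const_mul M).add hX)
      (.of_forall fun p => min_one_abs_mul_sub_le hM c p.1 p.2)
  have hYc := integral_min_one_abs_sub_le_dBL_dirac (μ.map Prod.snd) c
  have hXν := abs_integral_sub_le_two_mul_dBL (μ := μ.map Prod.fst) (ν := ν)
    (lipschitzWith_tailCutoff M) fun x => by
      rw [abs_of_nonneg (tailCutoff_nonneg M x)]; exact tailCutoff_le_one M x
  have := mul_le_mul_of_nonneg_left hYc (by linarith : 0 ≤ M)
  linarith [le_abs_self (∫ x, tailCutoff M x ∂(μ.map Prod.fst) - ∫ x, tailCutoff M x ∂ν)]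

end Slutsky

theorem slutsky_random_measures_general
    {Ω : Type*} [MeasurableSpace Ω] (Pr : Measure Ω)
    (P : ℕ → Ω → Measure (ℝ × ℝ)) (hPprob : ∀ n ω, IsProbabilityMeasure (P n ω))
    (PX : Measure ℝ) [IsProbabilityMeasure PX] (c : ℝ)
    (hX : ∀ ε > (0 : ℝ), Tendsto
      (fun n => Pr {ω | ε < dBL ((P n ω).map Prod.fst) PX}) atTop (nhds 0))
    (hY : ∀ ε > (0 : ℝ), Tendsto
      (fun n => Pr {ω | ε < dBL ((P n ω).map Prod.snd) (Measure.dirac c)}) atTop (nhds 0)) :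
    (∀ ε > (0 : ℝ), Tendsto (fun n => Pr {ω |
        ε < dBL ((P n ω).map fun p => p.1 + p.2) ((P n ω).map fun p => p.1 + c)})
      atTop (nhds 0)) ∧
    (∀ ε > (0 : ℝ), Tendsto (fun n => Pr {ω |
        ε < dBL ((P n ω).map fun p => p.1 * p.2) ((P n ω).map fun p => c * p.1)})
      atTop (nhds 0)) := by
  have hX' : TendstoZeroInProb Pr fun n ω => dBL ((P n ω).map Prod.fst) PX := hX
  have hY' : TendstoZeroInProb Pr fun n ω => dBL ((P n ω).map Prod.snd) (Measure.dirac c) := hY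
  refine ⟨(hY'.const_mul four_pos).mono fun n ω => ?_,
    TendstoZeroInProb.of_forall_le_add fun δ hδ => ?_⟩
  · have := hPprob n ω
    exact dBL_map_add_le (P n ω) c
  · obtain ⟨M, hMδ, hM⟩ := (((tendsto_integral_tailCutoff PX).const_mul 2).eventually_lt_const
      (by simpa using hδ) |>.and (eventually_ge_atTop 1)).exists
    refine ⟨_, (hY'.const_mul (by positivity : (0 : ℝ) < 4 * M)).add (hX'.const_mul four_pos),
      fun n ω => ?_⟩
    have := hPprob n ω
    linarith [dBL_map_mul_le (P n ω) c PX hM]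

/-- **Slutsky-type lemma for random sequences of probability measures (Lemma 2).**
Let `Z₁, Z₂, …` be i.i.d. from `P₀` on a Polish space, and let `Pₙ` be random probability
measures on `ℝ²`, `σ(Z^{(n)})`-measurable, whose first marginals converge to a fixed law `P^X`
and whose second marginals converge to `δ_c` (both in `d_BL`, in probability). Then the laws
of `Xₙ + Yₙ` and `Xₙ + c`, and of `Xₙ·Yₙ` and `c·Xₙ` (under the conditional joint law `Pₙ`),
merge in `d_BL` in probability. -/
theorem slutsky_random_measures
    {𝒵 : Type*} [TopologicalSpace 𝒵] [PolishSpace 𝒵] [MeasurableSpace 𝒵] [BorelSpace 𝒵]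
    {Ω : Type*} [MeasurableSpace Ω] (Pr : Measure Ω) [IsProbabilityMeasure Pr]
    (P₀ : Measure 𝒵) [IsProbabilityMeasure P₀]
    (Z : ℕ → Ω → 𝒵) (hZmeas : ∀ i, Measurable (Z i))
    (hZlaw : ∀ i, Measure.map (Z i) Pr = P₀)
    (hZindep : iIndepFun Z Pr)
    (P : ℕ → Ω → Measure (ℝ × ℝ)) (hPprob : ∀ n ω, IsProbabilityMeasure (P n ω))
    (hPmeas : ∀ n, Measurable[MeasurableSpace.comap
        (fun ω => (fun i : Fin n => Z i ω)) inferInstance] (P n))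
    (PX : Measure ℝ) [IsProbabilityMeasure PX] (c : ℝ)
    (hX : ∀ ε > (0 : ℝ), Tendsto
      (fun n => Pr {ω | ε < dBL ((P n ω).map Prod.fst) PX}) atTop (nhds 0))
    (hY : ∀ ε > (0 : ℝ), Tendsto
      (fun n => Pr {ω | ε < dBL ((P n ω).map Prod.snd) (Measure.dirac c)}) atTop (nhds 0)) :
    (∀ ε > (0 : ℝ), Tendsto (fun n => Pr {ω |
        ε < dBL ((P n ω).map fun p => p.1 + p.2) ((P n ω).map fun p => p.1 + c)})
      atTop (nhds 0)) ∧
    (∀ ε > (0 : ℝ), Tendsto (fun n => Pr {ω |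
        ε < dBL ((P n ω).map fun p => p.1 * p.2) ((P n ω).map fun p => c * p.1)})
      atTop (nhds 0)) :=
  slutsky_random_measures_general Pr P hPprob PX c hX hY
end

section
/- Let f and f_0 be probability densities on ℝ with respect to Lebesgue measure, let M = ‖f_0‖_∞ with 0 < M < ∞, and suppose f is Lipschitz continuous with Lipschitz constant L > 0. If ∫ (√f(z) − √f_0(z))² dz < 8M²/L, then f(z) ≤ 8M for all z ∈ ℝ. -/
/-!
If `f z > 8M`, the Lipschitz bound keeps `f ≥ 4M` on the ball of radius `4M/L` around `z`.
There `√f - √f₀ ≥ 2√M - √M = √M`, so the Hellinger integrand is at least `M` on a set of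
length `8M/L`, and the Hellinger integral is at least `8M²/L`.
-/

open MeasureTheory Filter Metric
open scoped NNReal

theorem LipschitzWith.sub_mul_le_of_dist_le {α : Type*} [PseudoMetricSpace α] {K : ℝ≥0}
    {f : α → ℝ} (hf : LipschitzWith K f) {x y : α} {r : ℝ} (h : dist x y ≤ r) :
    f x - K * r ≤ f y := by
  have := hf.le_add_mul x y
  have : K * dist x y ≤ K * r := by gcongr
  linarith

theorem le_sq_sqrt_sub_sqrt {m a b : ℝ} (hm : 0 ≤ m) (ha : 4 * m ≤ a) (hb : b ≤ m) :
    m ≤ (√a - √b) ^ 2 := by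
  have h2m : 2 * √m ≤ √a := by
    calc 2 * √m = √(4 * m) := by
          rw [Real.sqrt_mul (by norm_num), show (4 : ℝ) = 2 ^ 2 by norm_num,
            Real.sqrt_sq (by norm_num)]
      _ ≤ √a := Real.sqrt_le_sqrt ha
  have hbm : √b ≤ √m := Real.sqrt_le_sqrt hb
  calc m = √m ^ 2 := (Real.sq_sqrt hm).symm
    _ ≤ (√a - √b) ^ 2 := by gcongr; linarith

section Hellinger

variable {α : Type*} [MeasurableSpace α] {μ : Measure α} {f f₀ : α → ℝ}

theorem MeasureTheory.Integrable.sq_sqrt_sub_sqrt (hf : Integrable f μ) (hf₀ : Integrable f₀ μ) :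
    Integrable (fun x ↦ (√(f x) - √(f₀ x)) ^ 2) μ := by
  refine ((hf.norm.add hf₀.norm).const_mul 2).mono'
    ((hf.aemeasurable.sqrt.sub hf₀.aemeasurable.sqrt).pow_const 2).aestronglyMeasurable
    (Eventually.of_forall fun x ↦ ?_)
  have hsq : ∀ t : ℝ, √t ^ 2 ≤ ‖t‖ := fun t ↦ by
    rw [Real.sq_sqrt', Real.norm_eq_abs]
    exact max_le (le_abs_self t) (abs_nonneg t)
  show ‖(√(f x) - √(f₀ x)) ^ 2‖ ≤ 2 * (‖f x‖ + ‖f₀ x‖)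
  rw [Real.norm_eq_abs, abs_of_nonneg (sq_nonneg _)]
  nlinarith [hsq (f x), hsq (f₀ x), sq_nonneg (√(f x) + √(f₀ x))]

theorem mul_measureReal_le_integral_sq_sqrt_sub_sqrt {M : ℝ} {s : Set α} (hM : 0 < M)
    (hf_ge : ∀ x ∈ s, 4 * M ≤ f x) (hf₀_le : ∀ x ∈ s, f₀ x ≤ M)
    (hf : Integrable f μ) (hf₀ : Integrable f₀ μ) :
    M * μ.real s ≤ ∫ x, (√(f x) - √(f₀ x)) ^ 2 ∂μ := by
  have hg := hf.sq_sqrt_sub_sqrt hf₀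
  have hs : s ⊆ {x | M ≤ (√(f x) - √(f₀ x)) ^ 2} := fun x hx ↦
    le_sq_sqrt_sub_sqrt hM.le (hf_ge x hx) (hf₀_le x hx)
  calc M * μ.real s ≤ M * μ.real {x | M ≤ (√(f x) - √(f₀ x)) ^ 2} := by
        gcongr
        exact (hg.measure_ge_lt_top hM).ne
    _ ≤ _ := mul_meas_ge_le_integral_of_nonneg (Eventually.of_forall fun _ ↦ sq_nonneg _) hg M

end Hellinger

theorem lipschitz_density_sup_bound_general
    (f f₀ : ℝ → ℝ)
    (hfI : Integrable f) (hf₀I : Integrable f₀)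
    (M : ℝ) (hbdd : BddAbove (Set.range f₀)) (hM : M = ⨆ x, f₀ x) (hMpos : 0 < M)
    (L : ℝ) (hL : 0 < L) (hlip : LipschitzWith (Real.toNNReal L) f)
    (hH : ∫ z, (Real.sqrt (f z) - Real.sqrt (f₀ z)) ^ 2 < 8 * M ^ 2 / L) :
    ∀ z, f z ≤ 8 * M := by
  intro z
  by_contra! hz
  have hf_ge : ∀ x ∈ closedBall z (4 * M / L), 4 * M ≤ f x := fun x hx ↦ by
    have := hlip.sub_mul_le_of_dist_le (mem_closedBall'.mp hx)
    rw [Real.coe_toNNReal _ hL.le, mul_div_cancel₀ _ hL.ne'] at this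
    linarith
  have hf₀_le : ∀ x ∈ closedBall z (4 * M / L), f₀ x ≤ M := fun x _ ↦ hM ▸ le_ciSup hbdd x
  have hball := mul_measureReal_le_integral_sq_sqrt_sub_sqrt hMpos hf_ge hf₀_le hfI hf₀I
  rw [Real.volume_real_closedBall (by positivity)] at hball
  have : M * (2 * (4 * M / L)) = 8 * M ^ 2 / L := by ring
  linarith

/-- **Sup-norm bound for a Lipschitz density close to a bounded density in Hellinger distance.**
If `f, f₀` are probability densities on `ℝ`, `M = ‖f₀‖_∞ ∈ (0, ∞)`, `f` is `L`-Lipschitz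
with `L > 0`, and `∫ (√f − √f₀)² < 8M²/L`, then `f ≤ 8M` everywhere. -/
theorem lipschitz_density_sup_bound
    (f f₀ : ℝ → ℝ) (hf : Measurable f) (hf₀ : Measurable f₀)
    (hfnn : ∀ x, 0 ≤ f x) (hf₀nn : ∀ x, 0 ≤ f₀ x)
    (hfI : Integrable f) (hf₀I : Integrable f₀)
    (hfint : ∫ x, f x = 1) (hf₀int : ∫ x, f₀ x = 1)
    (M : ℝ) (hbdd : BddAbove (Set.range f₀)) (hM : M = ⨆ x, f₀ x) (hMpos : 0 < M)
    (L : ℝ) (hL : 0 < L) (hlip : LipschitzWith (Real.toNNReal L) f)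
    (hH : ∫ z, (Real.sqrt (f z) - Real.sqrt (f₀ z)) ^ 2 < 8 * M ^ 2 / L) :
    ∀ z, f z ≤ 8 * M :=
  lipschitz_density_sup_bound_general f f₀ hfI hf₀I M hbdd hM hMpos L hL hlip hH
end

section
/- Let (X, A, Y) have joint law P_0 with X ∈ 𝒳, A ∈ {0,1}, and Y real-valued with E|Y| < ∞; let Q_0 be the law of X, let π_0(x) ∈ (0,1] be a version of E[A | X = x] with π_0 > 0 a.s., and let m_0 : 𝒳 → ℝ satisfy E[AY | X] = π_0(X) m_0(X) a.s. Let π : 𝒳 → (0,1] be measurable, m ∈ L²(Q_0), and Q any probability measure on 𝒳 with m ∈ L¹(Q), and suppose all integrals below are finite. Then the second-order remainder ∫ m_0 dQ_0 − ∫ m dQ − E_{P_0}[(A/π(X))(Y − m(X)) + m(X) − ∫ m dQ] equals ∫ π_0(x)(1/π_0(x) − 1/π(x))(m_0(x) − m(x)) dQ_0(x), and its absolute value is at most ‖1/π_0 − 1/π‖_{L²(Q_0)} · ‖m_0 − m‖_{L²(Q_0)}. -/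
/-!
Conditionally on `X`, the inverse-probability-weighted residual `A / π(X) * (Y - m(X))` has mean
`(π₀(X) m₀(X) - m(X) π₀(X)) / π(X)`: the factors that are functions of `X` pull out of the
conditional expectation, and `E[A | X] = π₀(X)`, `E[AY | X] = π₀(X) m₀(X)`. Subtracting this from
`∫ (m₀ - m) dQ₀` leaves `∫ (1 - π₀/π)(m₀ - m) dQ₀ = ∫ π₀ (1/π₀ - 1/π)(m₀ - m) dQ₀`, a product of the
two nuisance errors weighted by `π₀ ∈ (0, 1]`, so Cauchy–Schwarz in `L²(Q₀)` gives the bound.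
-/

open MeasureTheory ProbabilityTheory Filter

section CauchySchwarz

variable {α : Type*} [MeasurableSpace α] {μ : Measure α}

lemma integral_norm_mul_norm_le_sqrt_mul_sqrt {f g : α → ℝ} (hf : MemLp f 2 μ)
    (hg : MemLp g 2 μ) :
    ∫ a, ‖f a‖ * ‖g a‖ ∂μ ≤ √(∫ a, f a ^ 2 ∂μ) * √(∫ a, g a ^ 2 ∂μ) := by
  have hofReal : ENNReal.ofReal 2 = 2 := by norm_num
  have h := integral_mul_norm_le_Lp_mul_Lq Real.HolderConjugate.two_two
    (hofReal ▸ hf) (hofReal ▸ hg)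
  simp_rw [Real.rpow_two, Real.norm_eq_abs, sq_abs, ← Real.sqrt_eq_rpow] at h
  exact h

lemma abs_integral_mul_mul_le_of_abs_le_one {w f g : α → ℝ} (hw : ∀ᵐ a ∂μ, |w a| ≤ 1)
    (hf : MemLp f 2 μ) (hg : MemLp g 2 μ) :
    |∫ a, w a * f a * g a ∂μ| ≤ √(∫ a, f a ^ 2 ∂μ) * √(∫ a, g a ^ 2 ∂μ) := by
  calc |∫ a, w a * f a * g a ∂μ| ≤ ∫ a, |w a * f a * g a| ∂μ := abs_integral_le_integral_abs
    _ ≤ ∫ a, ‖f a‖ * ‖g a‖ ∂μ := by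
        refine integral_mono_of_nonneg (.of_forall fun a => abs_nonneg _)
          (hf.norm.integrable_mul hg.norm) ?_
        filter_upwards [hw] with a ha
        rw [abs_mul, abs_mul, Real.norm_eq_abs, Real.norm_eq_abs, mul_assoc]
        exact mul_le_of_le_one_left (by positivity) ha
    _ ≤ _ := integral_norm_mul_norm_le_sqrt_mul_sqrt hf hg

end CauchySchwarz

section ConditionalExpectation

variable {Ω 𝒳 : Type*} {mΩ : MeasurableSpace Ω} [m𝒳 : MeasurableSpace 𝒳] {P : Measure Ω}
  {X : Ω → 𝒳} {h k : 𝒳 → ℝ} {g : Ω → ℝ}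

lemma condExp_comp_mul_ae_eq (hh : Measurable h)
    (hg : Integrable g P) (hhg : Integrable (fun ω => h (X ω) * g ω) P)
    (hk : (fun ω => k (X ω)) =ᵐ[P] P[g | m𝒳.comap X]) :
    P[fun ω => h (X ω) * g ω | m𝒳.comap X] =ᵐ[P] fun ω => h (X ω) * k (X ω) := by
  have hhX : StronglyMeasurable[m𝒳.comap X] fun ω => h (X ω) :=
    (hh.comp (comap_measurable X)).stronglyMeasurable
  filter_upwards [condExp_mul_of_stronglyMeasurable_left hhX hhg hg, hk] with ω hpull hkω
  rw [Pi.mul_apply, ← hkω] at hpull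
  exact hpull

lemma condExp_mul_sub_comp_ae_eq {A Y : Ω → ℝ} {a b m : 𝒳 → ℝ} (hm : Measurable m)
    (hA : Integrable A P) (hAY : Integrable (fun ω => A ω * Y ω) P)
    (hmA : Integrable (fun ω => m (X ω) * A ω) P)
    (ha : (fun ω => a (X ω)) =ᵐ[P] P[A | m𝒳.comap X])
    (hb : (fun ω => b (X ω)) =ᵐ[P] P[fun ω => A ω * Y ω | m𝒳.comap X]) :
    P[fun ω => A ω * (Y ω - m (X ω)) | m𝒳.comap X] =ᵐ[P]
      fun ω => b (X ω) - m (X ω) * a (X ω) := by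
  have hsplit : (fun ω => A ω * (Y ω - m (X ω)))
      = (fun ω => A ω * Y ω) - fun ω => m (X ω) * A ω := by
    funext ω; simp only [Pi.sub_apply]; ring
  rw [hsplit]
  filter_upwards [condExp_sub hAY hmA (m𝒳.comap X), hb,
    condExp_comp_mul_ae_eq hm hA hmA ha] with ω hsub hbω hmω
  rw [hsub, Pi.sub_apply, ← hbω, hmω]

lemma integrable_map_mul_of_condExp_ae_eq (hX : Measurable X) (hh : Measurable h)
    (hk : Measurable k) (hg : Integrable g P)
    (hhg : Integrable (fun ω => h (X ω) * g ω) P)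
    (hkg : (fun ω => k (X ω)) =ᵐ[P] P[g | m𝒳.comap X]) :
    Integrable (fun x => h x * k x) (P.map X) :=
  (integrable_map_measure (hh.mul hk).aestronglyMeasurable hX.aemeasurable).2
    (integrable_condExp.congr (condExp_comp_mul_ae_eq hh hg hhg hkg))

lemma integral_comp_mul_eq_integral_map_mul [IsFiniteMeasure P] (hX : Measurable X)
    (hh : Measurable h) (hk : Measurable k) (hg : Integrable g P)
    (hhg : Integrable (fun ω => h (X ω) * g ω) P)
    (hkg : (fun ω => k (X ω)) =ᵐ[P] P[g | m𝒳.comap X]) :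
    ∫ ω, h (X ω) * g ω ∂P = ∫ x, h x * k x ∂P.map X := by
  have hhk : AEStronglyMeasurable (fun x => h x * k x) (P.map X) :=
    (hh.mul hk).aestronglyMeasurable
  rw [integral_map hX.aemeasurable hhk, ← integral_condExp hX.comap_le]
  exact integral_congr_ae (condExp_comp_mul_ae_eq hh hg hhg hkg)

lemma integral_ipw_residual_eq_integral_map [IsFiniteMeasure P] {A Y : Ω → ℝ}
    {a b m π : 𝒳 → ℝ} (hX : Measurable X)
    (hA_le : ∀ᵐ ω ∂P, ‖A ω‖ ≤ 1) (hAmeas : AEStronglyMeasurable A P) (hY : Integrable Y P)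
    (hm : Measurable m) (hmP : Integrable (fun ω => m (X ω)) P) (hπ : Measurable π)
    (ha : Measurable a) (hb : Measurable b)
    (hipw : Integrable (fun ω => A ω / π (X ω) * (Y ω - m (X ω))) P)
    (hav : (fun ω => a (X ω)) =ᵐ[P] P[A | m𝒳.comap X])
    (hbv : (fun ω => b (X ω)) =ᵐ[P] P[fun ω => A ω * Y ω | m𝒳.comap X]) :
    Integrable (fun x => 1 / π x * (b x - m x * a x)) (P.map X) ∧
      ∫ ω, A ω / π (X ω) * (Y ω - m (X ω)) ∂P
        = ∫ x, 1 / π x * (b x - m x * a x) ∂P.map X := by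
  have hAP : Integrable A P := by simpa using (integrable_const (1 : ℝ)).bdd_mul hAmeas hA_le
  have hAY : Integrable (fun ω => A ω * Y ω) P := hY.bdd_mul hAmeas hA_le
  have hmA : Integrable (fun ω => m (X ω) * A ω) P := hmP.mul_bdd hAmeas hA_le
  have hres : Integrable (fun ω => A ω * (Y ω - m (X ω))) P :=
    (hAY.sub hmA).congr (.of_forall fun ω => by simp only [Pi.sub_apply]; ring)
  have hipw_eq : (fun ω => A ω / π (X ω) * (Y ω - m (X ω)))
      = fun ω => 1 / π (X ω) * (A ω * (Y ω - m (X ω))) := by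
    funext ω; ring
  have hh : Measurable fun x => 1 / π x := hπ.const_div 1
  have hk : Measurable fun x => b x - m x * a x := hb.sub (hm.mul ha)
  have hcond := (condExp_mul_sub_comp_ae_eq hm hAP hAY hmA hav hbv).symm
  rw [hipw_eq] at hipw ⊢
  exact ⟨integrable_map_mul_of_condExp_ae_eq hX hh hk hres hipw hcond,
    integral_comp_mul_eq_integral_map_mul hX hh hk hres hipw hcond⟩

end ConditionalExpectation

theorem missing_second_order_bias_general
    {𝒳 : Type*} [MeasurableSpace 𝒳]
    (P₀ : Measure (𝒳 × ℝ × ℝ)) [IsProbabilityMeasure P₀]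
    (hA : ∀ᵐ z ∂P₀, z.2.1 = 0 ∨ z.2.1 = 1)
    (hYint : Integrable (fun z : 𝒳 × ℝ × ℝ => z.2.2) P₀)
    (Q₀ : Measure 𝒳) (hQ₀ : Q₀ = P₀.map Prod.fst)
    (π₀ : 𝒳 → ℝ) (hπ₀meas : Measurable π₀) (hπ₀range : ∀ x, 0 < π₀ x ∧ π₀ x ≤ 1)
    (hπ₀ver : (fun z : 𝒳 × ℝ × ℝ => π₀ z.1) =ᵐ[P₀]
      P₀[(fun z : 𝒳 × ℝ × ℝ => z.2.1) |
        MeasurableSpace.comap (fun z : 𝒳 × ℝ × ℝ => z.1) inferInstance])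
    (m₀ : 𝒳 → ℝ) (hm₀meas : Measurable m₀)
    (hm₀ver : (fun z : 𝒳 × ℝ × ℝ => π₀ z.1 * m₀ z.1) =ᵐ[P₀]
      P₀[(fun z : 𝒳 × ℝ × ℝ => z.2.1 * z.2.2) |
        MeasurableSpace.comap (fun z : 𝒳 × ℝ × ℝ => z.1) inferInstance])
    (π : 𝒳 → ℝ) (hπmeas : Measurable π)
    (m : 𝒳 → ℝ) (hmmeas : Measurable m) (hmL2 : MemLp m 2 Q₀)
    (Q : Measure 𝒳)
    -- all the integrals appearing below are finite
    (hint1 : Integrable (fun z : 𝒳 × ℝ × ℝ =>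
      z.2.1 / π z.1 * (z.2.2 - m z.1) + m z.1) P₀)
    (hint2 : Integrable m₀ Q₀)
    (hL2a : MemLp (fun x => 1 / π₀ x - 1 / π x) 2 Q₀)
    (hL2b : MemLp (fun x => m₀ x - m x) 2 Q₀) :
    ((∫ x, m₀ x ∂Q₀) - (∫ x, m x ∂Q)
        - ∫ z, (z.2.1 / π z.1 * (z.2.2 - m z.1) + m z.1 - ∫ x, m x ∂Q) ∂P₀
      = ∫ x, π₀ x * (1 / π₀ x - 1 / π x) * (m₀ x - m x) ∂Q₀) ∧
    |(∫ x, m₀ x ∂Q₀) - (∫ x, m x ∂Q)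
        - ∫ z, (z.2.1 / π z.1 * (z.2.2 - m z.1) + m z.1 - ∫ x, m x ∂Q) ∂P₀|
      ≤ Real.sqrt (∫ x, (1 / π₀ x - 1 / π x) ^ 2 ∂Q₀)
        * Real.sqrt (∫ x, (m₀ x - m x) ^ 2 ∂Q₀) := by
  have hA_le : ∀ᵐ z ∂P₀, ‖z.2.1‖ ≤ (1 : ℝ) :=
    hA.mono fun z hz => by rcases hz with hz | hz <;> simp [hz]
  have : IsProbabilityMeasure Q₀ :=
    hQ₀ ▸ Measure.isProbabilityMeasure_map measurable_fst.aemeasurable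
  have hmQ₀ : Integrable m Q₀ := hmL2.integrable one_le_two
  have hmP₀ : Integrable (fun z : 𝒳 × ℝ × ℝ => m z.1) P₀ :=
    (integrable_map_measure (hQ₀ ▸ hmL2.1) measurable_fst.aemeasurable).1 (hQ₀ ▸ hmQ₀)
  have hipw : Integrable (fun z : 𝒳 × ℝ × ℝ => z.2.1 / π z.1 * (z.2.2 - m z.1)) P₀ :=
    (hint1.sub hmP₀).congr (.of_forall fun z => add_sub_cancel_right _ _)
  obtain ⟨hbias_int, hbias⟩ := hQ₀ ▸ integral_ipw_residual_eq_integral_map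
    (b := fun x => π₀ x * m₀ x) measurable_fst hA_le
    (measurable_fst.comp measurable_snd).aestronglyMeasurable hYint hmmeas hmP₀ hπmeas hπ₀meas
    (hπ₀meas.mul hm₀meas) hipw hπ₀ver hm₀ver
  have hmean : ∫ z, (z.2.1 / π z.1 * (z.2.2 - m z.1) + m z.1 - ∫ x, m x ∂Q) ∂P₀
      = (∫ x, 1 / π x * (π₀ x * m₀ x - m x * π₀ x) ∂Q₀) + (∫ x, m x ∂Q₀) - ∫ x, m x ∂Q := by
    rw [integral_sub hint1 (integrable_const _), integral_add hipw hmP₀, integral_const,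
      probReal_univ, one_smul, ← hbias, hQ₀,
      integral_map measurable_fst.aemeasurable (hQ₀ ▸ hmL2.1)]
  have hremainder : ∫ x, π₀ x * (1 / π₀ x - 1 / π x) * (m₀ x - m x) ∂Q₀
      = (∫ x, m₀ x ∂Q₀) - (∫ x, m x ∂Q₀) - ∫ x, 1 / π x * (π₀ x * m₀ x - m x * π₀ x) ∂Q₀ := by
    rw [← integral_sub hint2 hmQ₀, ← integral_sub (hL2b.integrable one_le_two) hbias_int]
    refine integral_congr_ae (.of_forall fun x => ?_)
    have := (hπ₀range x).1.ne'
    field_simp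
  have hidentity : (∫ x, m₀ x ∂Q₀) - (∫ x, m x ∂Q)
        - ∫ z, (z.2.1 / π z.1 * (z.2.2 - m z.1) + m z.1 - ∫ x, m x ∂Q) ∂P₀
      = ∫ x, π₀ x * (1 / π₀ x - 1 / π x) * (m₀ x - m x) ∂Q₀ := by
    rw [hmean, hremainder]; ring
  refine ⟨hidentity, hidentity ▸ abs_integral_mul_mul_le_of_abs_le_one ?_ hL2a hL2b⟩
  exact .of_forall fun x => abs_le.2 ⟨by linarith [(hπ₀range x).1], (hπ₀range x).2⟩

/-- **Second-order bias identity and doubly robust bound for the missing-at-random mean.**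
For data `(X, A, Y) ~ P₀` with `A ∈ {0,1}`, `E|Y| < ∞`, `π₀` a version of `E[A|X]` with
`π₀ > 0`, and `m₀` satisfying `E[AY|X] = π₀(X)m₀(X)` a.s., the second-order remainder
`∫ m₀ dQ₀ − ∫ m dQ − E_{P₀}[(A/π(X))(Y − m(X)) + m(X) − ∫ m dQ]` equals
`∫ π₀(1/π₀ − 1/π)(m₀ − m) dQ₀`, and is bounded in absolute value by
`‖1/π₀ − 1/π‖_{L²(Q₀)} · ‖m₀ − m‖_{L²(Q₀)}`. -/
theorem missing_second_order_bias
    {𝒳 : Type*} [MeasurableSpace 𝒳]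
    (P₀ : Measure (𝒳 × ℝ × ℝ)) [IsProbabilityMeasure P₀]
    (hA : ∀ᵐ z ∂P₀, z.2.1 = 0 ∨ z.2.1 = 1)
    (hYint : Integrable (fun z : 𝒳 × ℝ × ℝ => z.2.2) P₀)
    (Q₀ : Measure 𝒳) (hQ₀ : Q₀ = P₀.map Prod.fst)
    (π₀ : 𝒳 → ℝ) (hπ₀meas : Measurable π₀) (hπ₀range : ∀ x, 0 < π₀ x ∧ π₀ x ≤ 1)
    (hπ₀ver : (fun z : 𝒳 × ℝ × ℝ => π₀ z.1) =ᵐ[P₀]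
      P₀[(fun z : 𝒳 × ℝ × ℝ => z.2.1) |
        MeasurableSpace.comap (fun z : 𝒳 × ℝ × ℝ => z.1) inferInstance])
    (m₀ : 𝒳 → ℝ) (hm₀meas : Measurable m₀)
    (hm₀ver : (fun z : 𝒳 × ℝ × ℝ => π₀ z.1 * m₀ z.1) =ᵐ[P₀]
      P₀[(fun z : 𝒳 × ℝ × ℝ => z.2.1 * z.2.2) |
        MeasurableSpace.comap (fun z : 𝒳 × ℝ × ℝ => z.1) inferInstance])
    (π : 𝒳 → ℝ) (hπmeas : Measurable π) (hπrange : ∀ x, 0 < π x ∧ π x ≤ 1)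
    (m : 𝒳 → ℝ) (hmmeas : Measurable m) (hmL2 : MemLp m 2 Q₀)
    (Q : Measure 𝒳) [IsProbabilityMeasure Q] (hmQ : Integrable m Q)
    -- all the integrals appearing below are finite
    (hint1 : Integrable (fun z : 𝒳 × ℝ × ℝ =>
      z.2.1 / π z.1 * (z.2.2 - m z.1) + m z.1) P₀)
    (hint2 : Integrable m₀ Q₀)
    (hint3 : Integrable (fun x => π₀ x * (1 / π₀ x - 1 / π x) * (m₀ x - m x)) Q₀)
    (hL2a : MemLp (fun x => 1 / π₀ x - 1 / π x) 2 Q₀)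
    (hL2b : MemLp (fun x => m₀ x - m x) 2 Q₀) :
    ((∫ x, m₀ x ∂Q₀) - (∫ x, m x ∂Q)
        - ∫ z, (z.2.1 / π z.1 * (z.2.2 - m z.1) + m z.1 - ∫ x, m x ∂Q) ∂P₀
      = ∫ x, π₀ x * (1 / π₀ x - 1 / π x) * (m₀ x - m x) ∂Q₀) ∧
    |(∫ x, m₀ x ∂Q₀) - (∫ x, m x ∂Q)
        - ∫ z, (z.2.1 / π z.1 * (z.2.2 - m z.1) + m z.1 - ∫ x, m x ∂Q) ∂P₀|
      ≤ Real.sqrt (∫ x, (1 / π₀ x - 1 / π x) ^ 2 ∂Q₀)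
        * Real.sqrt (∫ x, (m₀ x - m x) ^ 2 ∂Q₀) :=
  missing_second_order_bias_general P₀ hA hYint Q₀ hQ₀ π₀ hπ₀meas hπ₀range hπ₀ver m₀ hm₀meas hm₀ver
    π hπmeas m hmmeas hmL2 Q hint1 hint2 hL2a hL2b
end

section
/- Let (X, A, Y) have joint law P_0 with X ∈ 𝒳, A ∈ {0,1}, and Y real-valued. Let π, π_0 : 𝒳 → (0,1] and m, m_0 : 𝒳 → ℝ be measurable, and suppose for some constants δ, C > 0 that 1/π ≤ 1/δ and 1/π_0 ≤ 1/δ pointwise, and |Y − m(X)| ≤ C P_0-almost surely. Define ψ_P(Z) = (A/π(X))(Y − m(X)) + m(X) and ψ_{P_0}(Z) = (A/π_0(X))(Y − m_0(X)) + m_0(X). Then ‖ψ_P − ψ_{P_0}‖_{L²(P_0)} ≤ (1 + 1/δ)·‖m − m_0‖_{L²(P_0)} + C·‖1/π − 1/π_0‖_{L²(P_0)}. -/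
/-!
The difference of the two influence functions splits as
`(1 - A/π₀(X))(m - m₀)(X) + A(Y - m(X))(1/π(X) - 1/π₀(X))`, so it is dominated pointwise by
`(1 + 1/δ)|m - m₀|(X) + C|1/π - 1/π₀|(X)`; monotonicity of the `L²` norm and Minkowski's
inequality then give the bound.
-/

open MeasureTheory

/-- Augmented inverse probability weighting: `p` is the propensity score and `t` the outcome
regression, both evaluated at the covariate. -/
noncomputable def aipw (a y p t : ℝ) : ℝ := a / p * (y - t) + t

theorem aipw_sub_aipw (a y p p₀ t t₀ : ℝ) :
    aipw a y p t - aipw a y p₀ t₀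
      = (1 - a / p₀) * (t - t₀) + a * (y - t) * (1 / p - 1 / p₀) := by
  simp only [aipw, div_eq_mul_one_div a]
  ring

theorem abs_aipw_sub_aipw_le {a y p p₀ t t₀ K C : ℝ} (ha : |a| ≤ 1) (hp₀ : |1 / p₀| ≤ K)
    (hy : |y - t| ≤ C) :
    |aipw a y p t - aipw a y p₀ t₀| ≤ (1 + K) * |t - t₀| + C * |1 / p - 1 / p₀| := by
  have hweight : |1 - a / p₀| ≤ 1 + K :=
    calc |1 - a / p₀| ≤ 1 + |a| * |1 / p₀| := by
          rw [div_eq_mul_one_div, ← abs_mul]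
          simpa using abs_sub (1 : ℝ) (a * (1 / p₀))
      _ ≤ 1 + K := by nlinarith [abs_nonneg a, abs_nonneg (1 / p₀)]
  have hresidual : |a * (y - t)| ≤ C := by
    rw [abs_mul]
    nlinarith [abs_nonneg a, abs_nonneg (y - t)]
  rw [aipw_sub_aipw]
  calc _ ≤ |(1 - a / p₀) * (t - t₀)| + |a * (y - t) * (1 / p - 1 / p₀)| := abs_add_le _ _
    _ ≤ _ := by
      rw [abs_mul, abs_mul (a * (y - t))]
      gcongr

section SqrtIntegralSq

variable {α : Type*} [MeasurableSpace α] {μ : Measure α} {u v : α → ℝ}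

theorem MeasureTheory.MemLp.eLpNorm_two_eq_ofReal_sqrt (hu : MemLp u 2 μ) :
    eLpNorm u 2 μ = ENNReal.ofReal √(∫ x, u x ^ 2 ∂μ) := by
  rw [hu.eLpNorm_eq_integral_rpow_norm two_ne_zero ENNReal.ofNat_ne_top, Real.sqrt_eq_rpow]
  norm_num [Real.norm_eq_abs, sq_abs]

theorem sqrt_integral_sq_le_of_abs_le (hv : MemLp v 2 μ) (huv : ∀ᵐ x ∂μ, |u x| ≤ v x) :
    √(∫ x, u x ^ 2 ∂μ) ≤ √(∫ x, v x ^ 2 ∂μ) := by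
  refine Real.sqrt_le_sqrt (integral_mono_of_nonneg (ae_of_all _ fun x => sq_nonneg (u x))
    hv.integrable_sq ?_)
  filter_upwards [huv] with x hx
  simpa only [sq_abs] using pow_le_pow_left₀ (abs_nonneg (u x)) hx 2

theorem sqrt_integral_sq_add_le (hu : MemLp u 2 μ) (hv : MemLp v 2 μ) :
    √(∫ x, (u x + v x) ^ 2 ∂μ) ≤ √(∫ x, u x ^ 2 ∂μ) + √(∫ x, v x ^ 2 ∂μ) := by
  rw [← ENNReal.ofReal_le_ofReal_iff (by positivity), ENNReal.ofReal_add (by positivity)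
    (by positivity), ← hu.eLpNorm_two_eq_ofReal_sqrt, ← hv.eLpNorm_two_eq_ofReal_sqrt]
  exact (hu.add hv).eLpNorm_two_eq_ofReal_sqrt.symm.trans_le
    (eLpNorm_add_le hu.1 hv.1 one_le_two)

theorem sqrt_integral_sq_const_mul (c : ℝ) (u : α → ℝ) :
    √(∫ x, (c * u x) ^ 2 ∂μ) = |c| * √(∫ x, u x ^ 2 ∂μ) := by
  simp only [mul_pow, integral_const_mul]
  rw [Real.sqrt_mul (sq_nonneg c), Real.sqrt_sq_eq_abs]

end SqrtIntegralSq

theorem missing_influence_L2_perturbation_general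
    {𝒳 : Type*} [MeasurableSpace 𝒳]
    (P₀ : Measure (𝒳 × ℝ × ℝ)) [IsProbabilityMeasure P₀]
    (hA : ∀ᵐ z ∂P₀, z.2.1 = 0 ∨ z.2.1 = 1)
    (π π₀ m m₀ : 𝒳 → ℝ)
    (δ C : ℝ) (hδ : 0 < δ) (hC : 0 < C)
    (hπ₀range : ∀ x, 0 < π₀ x ∧ π₀ x ≤ 1)
    (hπ₀bdd : ∀ x, 1 / π₀ x ≤ 1 / δ)
    (hYm : ∀ᵐ z ∂P₀, |z.2.2 - m z.1| ≤ C)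
    (hmL2 : MemLp (fun z : 𝒳 × ℝ × ℝ => m z.1 - m₀ z.1) 2 P₀)
    (hπL2 : MemLp (fun z : 𝒳 × ℝ × ℝ => 1 / π z.1 - 1 / π₀ z.1) 2 P₀) :
    Real.sqrt (∫ z, ((z.2.1 / π z.1 * (z.2.2 - m z.1) + m z.1)
          - (z.2.1 / π₀ z.1 * (z.2.2 - m₀ z.1) + m₀ z.1)) ^ 2 ∂P₀)
      ≤ (1 + 1 / δ) * Real.sqrt (∫ z, (m z.1 - m₀ z.1) ^ 2 ∂P₀)
        + C * Real.sqrt (∫ z, (1 / π z.1 - 1 / π₀ z.1) ^ 2 ∂P₀) := by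
  have hdom : ∀ᵐ z ∂P₀, |aipw z.2.1 z.2.2 (π z.1) (m z.1) - aipw z.2.1 z.2.2 (π₀ z.1) (m₀ z.1)|
      ≤ (1 + 1 / δ) * |m z.1 - m₀ z.1| + C * |1 / π z.1 - 1 / π₀ z.1| := by
    filter_upwards [hA, hYm] with z hz hy
    refine abs_aipw_sub_aipw_le (by rcases hz with h | h <;> simp [h]) ?_ hy
    rw [abs_of_pos (one_div_pos.2 (hπ₀range z.1).1)]
    exact hπ₀bdd z.1
  have hmL2' := hmL2.abs.const_mul (1 + 1 / δ)
  have hπL2' := hπL2.abs.const_mul C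
  calc _ ≤ _ := sqrt_integral_sq_le_of_abs_le (hmL2'.add hπL2') hdom
    _ ≤ _ := sqrt_integral_sq_add_le hmL2' hπL2'
    _ = _ := by
      simp only [sqrt_integral_sq_const_mul, Pi.abs_apply, sq_abs]
      rw [abs_of_pos (by positivity), abs_of_pos hC]

/-- **L² perturbation bound for the (uncentred) missing-at-random influence function.**
With `ψ_P(z) = (a/π(x))(y − m(x)) + m(x)` and `ψ_{P₀}(z) = (a/π₀(x))(y − m₀(x)) + m₀(x)`,
if `1/π ≤ 1/δ`, `1/π₀ ≤ 1/δ` pointwise, `A ∈ {0,1}` and `|Y − m(X)| ≤ C` a.s., then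
`‖ψ_P − ψ_{P₀}‖_{L²(P₀)} ≤ (1 + 1/δ)‖m − m₀‖_{L²(P₀)} + C‖1/π − 1/π₀‖_{L²(P₀)}`. -/
theorem missing_influence_L2_perturbation
    {𝒳 : Type*} [MeasurableSpace 𝒳]
    (P₀ : Measure (𝒳 × ℝ × ℝ)) [IsProbabilityMeasure P₀]
    (hA : ∀ᵐ z ∂P₀, z.2.1 = 0 ∨ z.2.1 = 1)
    (π π₀ m m₀ : 𝒳 → ℝ)
    (hπmeas : Measurable π) (hπ₀meas : Measurable π₀)
    (hmmeas : Measurable m) (hm₀meas : Measurable m₀)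
    (δ C : ℝ) (hδ : 0 < δ) (hC : 0 < C)
    (hπrange : ∀ x, 0 < π x ∧ π x ≤ 1) (hπ₀range : ∀ x, 0 < π₀ x ∧ π₀ x ≤ 1)
    (hπbdd : ∀ x, 1 / π x ≤ 1 / δ) (hπ₀bdd : ∀ x, 1 / π₀ x ≤ 1 / δ)
    (hYm : ∀ᵐ z ∂P₀, |z.2.2 - m z.1| ≤ C)
    (hmL2 : MemLp (fun z : 𝒳 × ℝ × ℝ => m z.1 - m₀ z.1) 2 P₀)
    (hπL2 : MemLp (fun z : 𝒳 × ℝ × ℝ => 1 / π z.1 - 1 / π₀ z.1) 2 P₀) :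
    Real.sqrt (∫ z, ((z.2.1 / π z.1 * (z.2.2 - m z.1) + m z.1)
          - (z.2.1 / π₀ z.1 * (z.2.2 - m₀ z.1) + m₀ z.1)) ^ 2 ∂P₀)
      ≤ (1 + 1 / δ) * Real.sqrt (∫ z, (m z.1 - m₀ z.1) ^ 2 ∂P₀)
        + C * Real.sqrt (∫ z, (1 / π z.1 - 1 / π₀ z.1) ^ 2 ∂P₀) :=
  missing_influence_L2_perturbation_general P₀ hA π π₀ m m₀ δ C hδ hC hπ₀range hπ₀bdd hYm hmL2 hπL2
end

section
/- Let (X, A, Y) have joint law P_0 with X ∈ 𝒳, A ∈ {0,1}, and Y real-valued and integrable; let Q_0 be the law of X, and let π_0(x) be a version of E[A | X = x], μ_0^(1)(x) satisfy E[AY | X] = π_0(X)μ_0^(1)(X) a.s., and μ_0^(0)(x) satisfy E[(1−A)Y | X] = (1 − π_0(X))μ_0^(0)(X) a.s., with ∫ π_0 dQ_0 > 0. Define χ(P_0) = ∫ π_0(μ_0^(1) − μ_0^(0)) dQ_0 / ∫ π_0 dQ_0. Let π : 𝒳 → [0, 1−δ] for some δ > 0 and μ^(0) ∈ L²(Q_0)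 be measurable, and let h(Z) = ((A − π(X))/(1 − π(X)))(Y − μ^(0)(X)) − A·χ(P_0). Then, assuming integrability of all terms, E_{P_0}[h(Z)] = ∫ (π(x) − π_0(x))(μ^(0)(x) − μ_0^(0)(x))/(1 − π(x)) dQ_0(x), and |E_{P_0}[h(Z)]| ≤ (1/δ)·‖π − π_0‖_{L²(Q_0)}·‖μ^(0) − μ_0^(0)‖_{L²(Q_0)}. -/
/-! The integrand is affine in `A * Y`, `(1 - A) * Y`, `A` and `1`, with coefficients that are
functions of `X`. Pulling these coefficients out of the conditional expectation given `X`, its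
mean is the `Q₀`-integral obtained by replacing the four observations with their conditional
means `π₀ μ₀¹`, `(1 - π₀) μ₀⁰`, `π₀` and `1`. That integrand regroups as the second-order
remainder `(π - π₀)(μ⁰ - μ₀⁰)/(1 - π)` plus `π₀ (μ₀¹ - μ₀⁰ - χ)`, whose integral vanishes because
`χ` is the `π₀`-weighted mean of `μ₀¹ - μ₀⁰`. The bound then follows from `1 - π ≥ δ` and the
Cauchy–Schwarz inequality in `L²(Q₀)`. -/

open MeasureTheory

theorem abs_div_le_abs_div_of_le {u b δ : ℝ} (hδ : 0 < δ) (hb : δ ≤ b) : |u / b| ≤ |u| / δ := by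
  rw [abs_div, abs_of_pos (hδ.trans_le hb)]
  exact div_le_div_of_nonneg_left (abs_nonneg u) hδ hb

section Integrals

variable {𝒳 : Type*} [MeasurableSpace 𝒳] {Q : Measure 𝒳}

theorem MeasureTheory.Integrable.div_of_le {u b : 𝒳 → ℝ} {δ : ℝ} (hu : Integrable u Q)
    (hb : Measurable b) (hδ : 0 < δ) (hδb : ∀ x, δ ≤ b x) : Integrable (fun x => u x / b x) Q := by
  refine (hu.bdd_mul (c := 1 / δ) (hb.const_div 1).aestronglyMeasurable
    (ae_of_all _ fun x => ?_)).congr (ae_of_all _ fun x => by simp [div_eq_inv_mul])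
  simpa only [Real.norm_eq_abs, abs_one] using abs_div_le_abs_div_of_le (u := 1) hδ (hδb x)

theorem integral_mul_sub_weighted_mean_eq_zero {w f : 𝒳 → ℝ} (hw : Integrable w Q)
    (hwf : Integrable (fun x => w x * f x) Q) (hw₀ : ∫ x, w x ∂Q ≠ 0) :
    ∫ x, w x * (f x - (∫ y, w y * f y ∂Q) / ∫ y, w y ∂Q) ∂Q = 0 := by
  simp only [mul_sub]
  rw [integral_sub hwf (hw.mul_const _), integral_mul_const]
  field_simp
  ring

theorem integral_abs_mul_abs_le_sqrt_mul_sqrt {f g : 𝒳 → ℝ} (hf : MemLp f 2 Q)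
    (hg : MemLp g 2 Q) :
    ∫ x, |f x| * |g x| ∂Q ≤ √(∫ x, f x ^ 2 ∂Q) * √(∫ x, g x ^ 2 ∂Q) := by
  have h2 : ENNReal.ofReal 2 = 2 := by norm_num
  have hholder := integral_mul_le_Lp_mul_Lq_of_nonneg (μ := Q) Real.HolderConjugate.two_two
    (ae_of_all _ fun x => abs_nonneg (f x)) (ae_of_all _ fun x => abs_nonneg (g x))
    (h2 ▸ hf.abs) (h2 ▸ hg.abs)
  simpa only [Real.rpow_two, sq_abs, ← Real.sqrt_eq_rpow] using hholder

theorem abs_integral_mul_div_le {f g b : 𝒳 → ℝ} {δ : ℝ} (hf : MemLp f 2 Q) (hg : MemLp g 2 Q)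
    (hδ : 0 < δ) (hδb : ∀ x, δ ≤ b x) :
    |∫ x, f x * g x / b x ∂Q| ≤ 1 / δ * (√(∫ x, f x ^ 2 ∂Q) * √(∫ x, g x ^ 2 ∂Q)) := by
  have hfg : Integrable (fun x => |f x| * |g x|) Q := by
    simpa only [Pi.mul_apply, abs_mul] using (hf.integrable_mul hg).abs
  calc |∫ x, f x * g x / b x ∂Q|
      ≤ ∫ x, |f x * g x / b x| ∂Q := abs_integral_le_integral_abs
    _ ≤ ∫ x, 1 / δ * (|f x| * |g x|) ∂Q := by
        refine integral_mono_of_nonneg (ae_of_all _ fun x => abs_nonneg _)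
          (hfg.const_mul _) (ae_of_all _ fun x => ?_)
        calc |f x * g x / b x| ≤ |f x * g x| / δ := abs_div_le_abs_div_of_le hδ (hδb x)
          _ = 1 / δ * (|f x| * |g x|) := by rw [abs_mul]; ring
    _ = 1 / δ * ∫ x, |f x| * |g x| ∂Q := integral_const_mul _ _
    _ ≤ 1 / δ * (√(∫ x, f x ^ 2 ∂Q) * √(∫ x, g x ^ 2 ∂Q)) := by
        gcongr
        exact integral_abs_mul_abs_le_sqrt_mul_sqrt hf hg

end Integrals

section ConditionalMeans

variable {Ω 𝒳 : Type*} [MeasurableSpace Ω] [MeasurableSpace 𝒳] {P : Measure Ω} {X : Ω → 𝒳}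

theorem integrable_map_of_comp_ae_eq_condExp (hX : Measurable X) {f : Ω → ℝ} {g : 𝒳 → ℝ}
    (hg : Measurable g)
    (hfg : (fun ω => g (X ω)) =ᵐ[P] P[f | MeasurableSpace.comap X inferInstance]) :
    Integrable g (P.map X) :=
  (integrable_map_measure hg.aestronglyMeasurable hX.aemeasurable).2
    (integrable_condExp.congr hfg.symm)

variable [IsFiniteMeasure P]

theorem integral_comp_mul_eq_integral_map_mul_s15 (hX : Measurable X) {f : Ω → ℝ} {c g : 𝒳 → ℝ}
    (hc : Measurable c) (hg : Measurable g) (hf : Integrable f P)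
    (hcf : Integrable (fun ω => c (X ω) * f ω) P)
    (hfg : (fun ω => g (X ω)) =ᵐ[P] P[f | MeasurableSpace.comap X inferInstance]) :
    Integrable (fun x => c x * g x) (P.map X) ∧
      ∫ ω, c (X ω) * f ω ∂P = ∫ x, c x * g x ∂(P.map X) := by
  have hpull : (fun ω => c (X ω) * g (X ω)) =ᵐ[P]
      P[fun ω => c (X ω) * f ω | MeasurableSpace.comap X inferInstance] := by
    filter_upwards [hfg, condExp_mul_of_stronglyMeasurable_left
      (hc.comp (comap_measurable X)).stronglyMeasurable hcf hf] with ω hω hω'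
    rw [hω]
    exact hω'.symm
  refine ⟨integrable_map_of_comp_ae_eq_condExp hX (hc.mul hg) hpull, ?_⟩
  calc ∫ ω, c (X ω) * f ω ∂P
      = ∫ ω, P[fun ω => c (X ω) * f ω | MeasurableSpace.comap X inferInstance] ω ∂P :=
        (integral_condExp hX.comap_le).symm
    _ = ∫ ω, c (X ω) * g (X ω) ∂P := integral_congr_ae hpull.symm
    _ = ∫ x, c x * g x ∂(P.map X) :=
        (integral_map hX.aemeasurable (hc.mul hg).aestronglyMeasurable).symm

theorem integral_treatment_outcome_linear_eq (hX : Measurable X) {A Y : Ω → ℝ}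
    (hA : Measurable A) (hA01 : ∀ᵐ ω ∂P, A ω = 0 ∨ A ω = 1) (hY : Integrable Y P)
    {π₀ μ₁ μ₀ : 𝒳 → ℝ} (hπ₀ : Measurable π₀) (hμ₁ : Measurable μ₁) (hμ₀ : Measurable μ₀)
    (hπ₀ver : (fun ω => π₀ (X ω)) =ᵐ[P] P[A | MeasurableSpace.comap X inferInstance])
    (hμ₁ver : (fun ω => π₀ (X ω) * μ₁ (X ω)) =ᵐ[P]
      P[fun ω => A ω * Y ω | MeasurableSpace.comap X inferInstance])
    (hμ₀ver : (fun ω => (1 - π₀ (X ω)) * μ₀ (X ω)) =ᵐ[P]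
      P[fun ω => (1 - A ω) * Y ω | MeasurableSpace.comap X inferInstance])
    {c₁ c₂ c₃ c₄ : 𝒳 → ℝ} {C₁ C₂ : ℝ} (hc₁ : Measurable c₁) (hc₂ : Measurable c₂)
    (hc₃ : Measurable c₃) (hc₄ : Measurable c₄) (hc₁C : ∀ x, |c₁ x| ≤ C₁)
    (hc₂C : ∀ x, |c₂ x| ≤ C₂) (hc₃int : Integrable c₃ (P.map X))
    (hc₄int : Integrable c₄ (P.map X)) :
    ∫ ω, (c₁ (X ω) * (A ω * Y ω) + c₂ (X ω) * ((1 - A ω) * Y ω) + c₃ (X ω) * A ω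
        + c₄ (X ω)) ∂P
      = ∫ x, (c₁ x * (π₀ x * μ₁ x) + c₂ x * ((1 - π₀ x) * μ₀ x) + c₃ x * π₀ x + c₄ x)
        ∂(P.map X) := by
  have hA_le : ∀ᵐ ω ∂P, ‖A ω‖ ≤ 1 := hA01.mono fun ω h => by rcases h with h | h <;> simp [h]
  have h1A_le : ∀ᵐ ω ∂P, ‖1 - A ω‖ ≤ 1 :=
    hA01.mono fun ω h => by rcases h with h | h <;> simp [h]
  have hAint : Integrable A P := .of_bound hA.aestronglyMeasurable 1 hA_le
  have hAY : Integrable (fun ω => A ω * Y ω) P := hY.bdd_mul hA.aestronglyMeasurable hA_le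
  have h1AY : Integrable (fun ω => (1 - A ω) * Y ω) P :=
    hY.bdd_mul (measurable_const.sub hA).aestronglyMeasurable h1A_le
  have hc₃P : Integrable (fun ω => c₃ (X ω)) P :=
    (integrable_map_measure hc₃.aestronglyMeasurable hX.aemeasurable).1 hc₃int
  have hc₄P : Integrable (fun ω => c₄ (X ω)) P :=
    (integrable_map_measure hc₄.aestronglyMeasurable hX.aemeasurable).1 hc₄int
  have ht₁ : Integrable (fun ω => c₁ (X ω) * (A ω * Y ω)) P :=
    hAY.bdd_mul (hc₁.comp hX).aestronglyMeasurable (ae_of_all _ fun ω => hc₁C (X ω))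
  have ht₂ : Integrable (fun ω => c₂ (X ω) * ((1 - A ω) * Y ω)) P :=
    h1AY.bdd_mul (hc₂.comp hX).aestronglyMeasurable (ae_of_all _ fun ω => hc₂C (X ω))
  have ht₃ : Integrable (fun ω => c₃ (X ω) * A ω) P :=
    hc₃P.mul_bdd hA.aestronglyMeasurable hA_le
  obtain ⟨hs₁, he₁⟩ := integral_comp_mul_eq_integral_map_mul_s15 hX hc₁ (g := fun x => π₀ x * μ₁ x)
    (by fun_prop) hAY ht₁ hμ₁ver
  obtain ⟨hs₂, he₂⟩ := integral_comp_mul_eq_integral_map_mul_s15 hX hc₂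
    (g := fun x => (1 - π₀ x) * μ₀ x) (by fun_prop) h1AY ht₂ hμ₀ver
  obtain ⟨hs₃, he₃⟩ := integral_comp_mul_eq_integral_map_mul_s15 hX hc₃ hπ₀ hAint ht₃ hπ₀ver
  rw [integral_add ?_ ?_, integral_add ?_ ?_, integral_add ?_ ?_, integral_add ?_ ?_,
    integral_add ?_ ?_, integral_add ?_ ?_, he₁, he₂, he₃,
    integral_map hX.aemeasurable hc₄.aestronglyMeasurable]
  all_goals first | assumption | fun_prop

theorem integral_att_correction_eq_remainder (hX : Measurable X) {A Y : Ω → ℝ} (hA : Measurable A)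
    (hA01 : ∀ᵐ ω ∂P, A ω = 0 ∨ A ω = 1) (hY : Integrable Y P) {π₀ μ₁ μ₀ : 𝒳 → ℝ}
    (hπ₀ : Measurable π₀) (hμ₁ : Measurable μ₁) (hμ₀ : Measurable μ₀)
    (hπ₀ver : (fun ω => π₀ (X ω)) =ᵐ[P] P[A | MeasurableSpace.comap X inferInstance])
    (hμ₁ver : (fun ω => π₀ (X ω) * μ₁ (X ω)) =ᵐ[P]
      P[fun ω => A ω * Y ω | MeasurableSpace.comap X inferInstance])
    (hμ₀ver : (fun ω => (1 - π₀ (X ω)) * μ₀ (X ω)) =ᵐ[P]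
      P[fun ω => (1 - A ω) * Y ω | MeasurableSpace.comap X inferInstance])
    (hπ₀int_ne : ∫ x, π₀ x ∂(P.map X) ≠ 0) {χ : ℝ}
    (hχ : χ = (∫ x, π₀ x * (μ₁ x - μ₀ x) ∂(P.map X)) / ∫ x, π₀ x ∂(P.map X))
    {π μ : 𝒳 → ℝ} {δ : ℝ} (hπ : Measurable π) (hδ : 0 < δ) (hδπ : ∀ x, δ ≤ 1 - π x)
    (hμ : Measurable μ) (hμint : Integrable μ (P.map X)) (hμ₀int : Integrable μ₀ (P.map X))
    (hrem : Integrable (fun x => (π x - π₀ x) * (μ x - μ₀ x) / (1 - π x)) (P.map X)) :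
    ∫ ω, ((A ω - π (X ω)) / (1 - π (X ω)) * (Y ω - μ (X ω)) - A ω * χ) ∂P
      = ∫ x, (π x - π₀ x) * (μ x - μ₀ x) / (1 - π x) ∂(P.map X) := by
  have hπ_ne : ∀ x, 1 - π x ≠ 0 := fun x => (hδ.trans_le (hδπ x)).ne'
  have hw_le : ∀ x, |1 / (1 - π x)| ≤ 1 / δ := fun x => by
    simpa only [abs_one] using abs_div_le_abs_div_of_le (u := 1) hδ (hδπ x)
  have hπ₀int : Integrable π₀ (P.map X) :=
    integrable_map_of_comp_ae_eq_condExp hX hπ₀ hπ₀ver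
  have hπ₀Δint : Integrable (fun x => π₀ x * (μ₁ x - μ₀ x)) (P.map X) := by
    have hπ₀μ₁ : Integrable (fun x => π₀ x * μ₁ x) (P.map X) :=
      integrable_map_of_comp_ae_eq_condExp hX (by fun_prop) hμ₁ver
    have hπ₀μ₀ : Integrable (fun x => (1 - π₀ x) * μ₀ x) (P.map X) :=
      integrable_map_of_comp_ae_eq_condExp hX (by fun_prop) hμ₀ver
    refine ((hπ₀μ₁.sub hμ₀int).add hπ₀μ₀).congr (ae_of_all _ fun x => ?_)
    simp only [Pi.add_apply, Pi.sub_apply]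
    ring
  have hcentred : Integrable (fun x => π₀ x * (μ₁ x - μ₀ x - χ)) (P.map X) := by
    simpa only [Pi.sub_def, mul_sub] using hπ₀Δint.sub (hπ₀int.mul_const χ)
  calc _ = ∫ ω, (1 * (A ω * Y ω) + (1 - 1 / (1 - π (X ω))) * ((1 - A ω) * Y ω)
          + (-(μ (X ω) / (1 - π (X ω))) - χ) * A ω
          + (μ (X ω) / (1 - π (X ω)) - μ (X ω))) ∂P :=
        integral_congr_ae (ae_of_all _ fun ω => by
          have := hπ_ne (X ω)
          field_simp
          ring)
    _ = ∫ x, (1 * (π₀ x * μ₁ x) + (1 - 1 / (1 - π x)) * ((1 - π₀ x) * μ₀ x)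
          + (-(μ x / (1 - π x)) - χ) * π₀ x + (μ x / (1 - π x) - μ x)) ∂(P.map X) :=
        integral_treatment_outcome_linear_eq (c₁ := fun _ => 1)
          (c₂ := fun x => 1 - 1 / (1 - π x)) (c₃ := fun x => -(μ x / (1 - π x)) - χ)
          (c₄ := fun x => μ x / (1 - π x) - μ x) hX hA hA01 hY hπ₀ hμ₁ hμ₀ hπ₀ver hμ₁ver
          hμ₀ver (by fun_prop) (by fun_prop) (by fun_prop) (by fun_prop) (C₁ := 1)
          (fun _ => by simp) (C₂ := 1 + 1 / δ)
          (fun x => (abs_sub _ _).trans (by rw [abs_one]; linarith [hw_le x]))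
          ((hμint.div_of_le (by fun_prop) hδ hδπ).neg.sub (integrable_const χ))
          ((hμint.div_of_le (by fun_prop) hδ hδπ).sub hμint)
    _ = ∫ x, ((π x - π₀ x) * (μ x - μ₀ x) / (1 - π x) + π₀ x * (μ₁ x - μ₀ x - χ))
          ∂(P.map X) :=
        integral_congr_ae (ae_of_all _ fun x => by
          have := hπ_ne x
          field_simp
          ring)
    _ = _ := by
      rw [integral_add hrem hcentred, hχ,
        integral_mul_sub_weighted_mean_eq_zero hπ₀int hπ₀Δint hπ₀int_ne, add_zero]

end ConditionalMeans

theorem att_second_order_bias_general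
    {𝒳 : Type*} [MeasurableSpace 𝒳]
    (P₀ : Measure (𝒳 × ℝ × ℝ)) [IsProbabilityMeasure P₀]
    (hA : ∀ᵐ z ∂P₀, z.2.1 = 0 ∨ z.2.1 = 1)
    (hYint : Integrable (fun z : 𝒳 × ℝ × ℝ => z.2.2) P₀)
    (Q₀ : Measure 𝒳) (hQ₀ : Q₀ = P₀.map Prod.fst)
    (π₀ : 𝒳 → ℝ) (hπ₀meas : Measurable π₀) (hπ₀range : ∀ x, 0 ≤ π₀ x ∧ π₀ x ≤ 1)
    (hπ₀ver : (fun z : 𝒳 × ℝ × ℝ => π₀ z.1) =ᵐ[P₀]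
      P₀[(fun z : 𝒳 × ℝ × ℝ => z.2.1) |
        MeasurableSpace.comap (fun z : 𝒳 × ℝ × ℝ => z.1) inferInstance])
    (μ01 μ00 : 𝒳 → ℝ) (hμ01meas : Measurable μ01) (hμ00meas : Measurable μ00)
    (hμ01ver : (fun z : 𝒳 × ℝ × ℝ => π₀ z.1 * μ01 z.1) =ᵐ[P₀]
      P₀[(fun z : 𝒳 × ℝ × ℝ => z.2.1 * z.2.2) |
        MeasurableSpace.comap (fun z : 𝒳 × ℝ × ℝ => z.1) inferInstance])
    (hμ00ver : (fun z : 𝒳 × ℝ × ℝ => (1 - π₀ z.1) * μ00 z.1) =ᵐ[P₀]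
      P₀[(fun z : 𝒳 × ℝ × ℝ => (1 - z.2.1) * z.2.2) |
        MeasurableSpace.comap (fun z : 𝒳 × ℝ × ℝ => z.1) inferInstance])
    (hπ₀pos : 0 < ∫ x, π₀ x ∂Q₀)
    (χATT : ℝ)
    (hχ : χATT = (∫ x, π₀ x * (μ01 x - μ00 x) ∂Q₀) / ∫ x, π₀ x ∂Q₀)
    (δ : ℝ) (hδ : 0 < δ)
    (π : 𝒳 → ℝ) (hπmeas : Measurable π) (hπrange : ∀ x, 0 ≤ π x ∧ π x ≤ 1 - δ)
    (μ0 : 𝒳 → ℝ) (hμ0meas : Measurable μ0) (hμ0L2 : MemLp μ0 2 Q₀)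
    -- integrability of all the terms appearing below
    (hμ00L2 : MemLp μ00 2 Q₀)
    (hint2 : Integrable (fun x => (π x - π₀ x) * (μ0 x - μ00 x) / (1 - π x)) Q₀) :
    (∫ z, ((z.2.1 - π z.1) / (1 - π z.1) * (z.2.2 - μ0 z.1) - z.2.1 * χATT) ∂P₀
      = ∫ x, (π x - π₀ x) * (μ0 x - μ00 x) / (1 - π x) ∂Q₀) ∧
    |∫ z, ((z.2.1 - π z.1) / (1 - π z.1) * (z.2.2 - μ0 z.1) - z.2.1 * χATT) ∂P₀|
      ≤ (1 / δ) * (Real.sqrt (∫ x, (π x - π₀ x) ^ 2 ∂Q₀)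
          * Real.sqrt (∫ x, (μ0 x - μ00 x) ^ 2 ∂Q₀)) := by
  subst hQ₀
  have hδπ : ∀ x, δ ≤ 1 - π x := fun x => by linarith [(hπrange x).2]
  have hident := integral_att_correction_eq_remainder measurable_fst (by fun_prop) hA hYint hπ₀meas
    hμ01meas hμ00meas hπ₀ver hμ01ver hμ00ver hπ₀pos.ne' hχ hπmeas hδ hδπ hμ0meas
    (hμ0L2.integrable one_le_two) (hμ00L2.integrable one_le_two) hint2
  have hΔπ : MemLp (fun x => π x - π₀ x) 2 (P₀.map Prod.fst) := by
    refine MemLp.of_bound (by fun_prop) 1 (ae_of_all _ fun x => ?_)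
    rw [Real.norm_eq_abs, abs_le]
    constructor <;> linarith [hπrange x, hπ₀range x]
  exact ⟨hident, hident ▸ abs_integral_mul_div_le hΔπ (hμ0L2.sub hμ00L2) hδ hδπ⟩

/-- **Second-order remainder identity and doubly robust bound for the ATT.**
For data `(X, A, Y) ~ P₀` with `A ∈ {0,1}`, `Y` integrable, `π₀` a version of `E[A|X]`,
`μ₀¹, μ₀⁰` satisfying `E[AY|X] = π₀ μ₀¹` and `E[(1−A)Y|X] = (1−π₀) μ₀⁰` a.s., `∫ π₀ dQ₀ > 0`,
`χ(P₀) = ∫ π₀(μ₀¹ − μ₀⁰) dQ₀ / ∫ π₀ dQ₀`, `π : 𝒳 → [0, 1−δ]`, and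
`h(Z) = ((A − π(X))/(1 − π(X)))(Y − μ⁰(X)) − A·χ(P₀)`, one has
`E_{P₀}[h] = ∫ (π − π₀)(μ⁰ − μ₀⁰)/(1 − π) dQ₀` and
`|E_{P₀}[h]| ≤ (1/δ)‖π − π₀‖_{L²(Q₀)}‖μ⁰ − μ₀⁰‖_{L²(Q₀)}`. -/
theorem att_second_order_bias
    {𝒳 : Type*} [MeasurableSpace 𝒳]
    (P₀ : Measure (𝒳 × ℝ × ℝ)) [IsProbabilityMeasure P₀]
    (hA : ∀ᵐ z ∂P₀, z.2.1 = 0 ∨ z.2.1 = 1)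
    (hYint : Integrable (fun z : 𝒳 × ℝ × ℝ => z.2.2) P₀)
    (Q₀ : Measure 𝒳) (hQ₀ : Q₀ = P₀.map Prod.fst)
    (π₀ : 𝒳 → ℝ) (hπ₀meas : Measurable π₀) (hπ₀range : ∀ x, 0 ≤ π₀ x ∧ π₀ x ≤ 1)
    (hπ₀ver : (fun z : 𝒳 × ℝ × ℝ => π₀ z.1) =ᵐ[P₀]
      P₀[(fun z : 𝒳 × ℝ × ℝ => z.2.1) |
        MeasurableSpace.comap (fun z : 𝒳 × ℝ × ℝ => z.1) inferInstance])
    (μ01 μ00 : 𝒳 → ℝ) (hμ01meas : Measurable μ01) (hμ00meas : Measurable μ00)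
    (hμ01ver : (fun z : 𝒳 × ℝ × ℝ => π₀ z.1 * μ01 z.1) =ᵐ[P₀]
      P₀[(fun z : 𝒳 × ℝ × ℝ => z.2.1 * z.2.2) |
        MeasurableSpace.comap (fun z : 𝒳 × ℝ × ℝ => z.1) inferInstance])
    (hμ00ver : (fun z : 𝒳 × ℝ × ℝ => (1 - π₀ z.1) * μ00 z.1) =ᵐ[P₀]
      P₀[(fun z : 𝒳 × ℝ × ℝ => (1 - z.2.1) * z.2.2) |
        MeasurableSpace.comap (fun z : 𝒳 × ℝ × ℝ => z.1) inferInstance])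
    (hπ₀pos : 0 < ∫ x, π₀ x ∂Q₀)
    (χATT : ℝ)
    (hχ : χATT = (∫ x, π₀ x * (μ01 x - μ00 x) ∂Q₀) / ∫ x, π₀ x ∂Q₀)
    (δ : ℝ) (hδ : 0 < δ)
    (π : 𝒳 → ℝ) (hπmeas : Measurable π) (hπrange : ∀ x, 0 ≤ π x ∧ π x ≤ 1 - δ)
    (μ0 : 𝒳 → ℝ) (hμ0meas : Measurable μ0) (hμ0L2 : MemLp μ0 2 Q₀)
    -- integrability of all the terms appearing below
    (hμ00L2 : MemLp μ00 2 Q₀)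
    (hint1 : Integrable (fun z : 𝒳 × ℝ × ℝ =>
      (z.2.1 - π z.1) / (1 - π z.1) * (z.2.2 - μ0 z.1) - z.2.1 * χATT) P₀)
    (hint2 : Integrable (fun x => (π x - π₀ x) * (μ0 x - μ00 x) / (1 - π x)) Q₀) :
    (∫ z, ((z.2.1 - π z.1) / (1 - π z.1) * (z.2.2 - μ0 z.1) - z.2.1 * χATT) ∂P₀
      = ∫ x, (π x - π₀ x) * (μ0 x - μ00 x) / (1 - π x) ∂Q₀) ∧
    |∫ z, ((z.2.1 - π z.1) / (1 - π z.1) * (z.2.2 - μ0 z.1) - z.2.1 * χATT) ∂P₀|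
      ≤ (1 / δ) * (Real.sqrt (∫ x, (π x - π₀ x) ^ 2 ∂Q₀)
          * Real.sqrt (∫ x, (μ0 x - μ00 x) ^ 2 ∂Q₀)) :=
  att_second_order_bias_general P₀ hA hYint Q₀ hQ₀ π₀ hπ₀meas hπ₀range hπ₀ver μ01 μ00 hμ01meas
    hμ00meas hμ01ver hμ00ver hπ₀pos χATT hχ δ hδ π hπmeas hπrange μ0 hμ0meas hμ0L2 hμ00L2 hint2
end
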